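/- arXiv:1204.1989 — 8 statements merged into one kernel-verified Lean document; each statement's English description precedes it below -/
import Mathlib

section
/- Every induced subgraph (with at least two vertices) of a P4-free graph contains a pair of twin vertices; conversely, if every induced subgraph with at least two vertices of a graph G contains a pair of twins, then G is P4-free. -/
open SimpleGraph

/-- The four distinct vertices `a, b, c, d` induce the path `a-b-c-d` in `G`. -/
def IsInducedP4 {V : Type*} (G : SimpleGraph V) (a b c d : V) : Prop :=
  a ≠ b ∧ a ≠ c ∧ a ≠ d ∧ b ≠ c ∧ b ≠ d ∧ c ≠ d ∧
  G.Adj a b ∧ G.Adj b c ∧ G.Adj c d ∧ ¬ G.Adj a c ∧ ¬ G.Adj a d ∧ ¬ G.Adj b d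

/-- `G` is `P₄`-free (a cograph): no four vertices induce a path. -/
def P4Free {V : Type*} (G : SimpleGraph V) : Prop :=
  ¬ ∃ a b c d : V, IsInducedP4 G a b c d

/-- `x` and `y` are twin vertices of `G`: they have the same neighbours
outside of each other. -/
def Twins {V : Type*} (G : SimpleGraph V) (x y : V) : Prop :=
  x ≠ y ∧ ∀ z : V, z ≠ x → z ≠ y → (G.Adj x z ↔ G.Adj y z)

/-!
Seinsche's theorem: for a `P₄`-free graph `G` on at least two vertices, `G` or `Gᶜ` is
disconnected. Otherwise pick a vertex `v`; by induction `G - v` or its complement is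
disconnected, say `G - v`. Then `v` is adjacent to every other vertex, since a non-neighbour of
`v` would give an induced `P₄` through `v` and a second component of `G - v`; so `v` is isolated
in `Gᶜ`, a contradiction.

Twins of `G` are twins of `Gᶜ`, so we may assume `G` disconnected. Twins inside a component of
at least two vertices (found by induction) are twins in `G`, as no edge leaves the component;
if all components are singletons, any two vertices are twins. Conversely, no two vertices of an
induced `P₄` are twins.
-/

namespace SimpleGraph

variable {V : Type*} {G : SimpleGraph V} {v : V}

lemma induce_compl (G : SimpleGraph V) (s : Set V) : Gᶜ.induce s = (G.induce s)ᶜ := by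
  ext x y
  simp [Subtype.ext_iff]

lemma Connected.exists_adj_reachable_induce_compl_singleton (hG : G.Connected)
    (a : ({v}ᶜ : Set V)) :
    ∃ x : ({v}ᶜ : Set V), (G.induce {v}ᶜ).Reachable a x ∧ G.Adj x v := by
  obtain ⟨p⟩ := hG.preconnected a v
  obtain ⟨d, -, ⟨hne, hreach⟩, hout⟩ :=
    p.exists_boundary_dart {y | ∃ hy : y ≠ v, (G.induce {v}ᶜ).Reachable a ⟨y, hy⟩}
      ⟨a.2, .rfl⟩ fun ⟨h, _⟩ => h rfl
  obtain rfl : d.snd = v := by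
    by_contra hsnd
    have hadj : (G.induce {v}ᶜ).Adj ⟨_, hne⟩ ⟨_, hsnd⟩ := d.adj
    exact hout ⟨hsnd, hreach.trans hadj.reachable⟩
  exact ⟨⟨d.fst, hne⟩, hreach, d.adj⟩

end SimpleGraph

namespace Twins

variable {V : Type*} {G : SimpleGraph V} {x y : V}

lemma compl (h : Twins G x y) : Twins Gᶜ x y := by
  refine ⟨h.1, fun z hzx hzy => ?_⟩
  simp only [compl_adj, h.2 z hzx hzy, hzx.symm, hzy.symm, ne_eq, not_false_eq_true, true_and]

lemma of_induce {s : Set V} (hs : ∀ ⦃x y⦄, x ∈ s → G.Adj x y → y ∈ s) {x y : s}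
    (h : Twins (G.induce s) x y) : Twins G x y := by
  refine ⟨Subtype.coe_injective.ne h.1, fun z hzx hzy => ?_⟩
  by_cases hz : z ∈ s
  · exact h.2 ⟨z, hz⟩ (ne_of_apply_ne Subtype.val hzx) (ne_of_apply_ne Subtype.val hzy)
  · exact iff_of_false (fun hxz => hz (hs x.2 hxz)) (fun hyz => hz (hs y.2 hyz))

end Twins

namespace P4Free

variable {V W : Type*} {G : SimpleGraph V} {H : SimpleGraph W} {v : V}

lemma of_embedding (f : H ↪g G) (hG : P4Free G) : P4Free H := by
  rintro ⟨a, b, c, d, h⟩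
  apply hG
  refine ⟨f a, f b, f c, f d, ?_⟩
  simpa only [IsInducedP4, f.injective.ne_iff, f.map_adj_iff] using h

lemma compl (hG : P4Free G) : P4Free Gᶜ := by
  rintro ⟨a, b, c, d, hab, hac, had, hbc, hbd, hcd, h1, h2, h3, h4, h5, h6⟩
  simp only [compl_adj, not_and, not_not] at h1 h2 h3 h4 h5 h6
  exact hG ⟨c, a, d, b, hac.symm, hcd, hbc.symm, had, hab, hbd.symm, (h4 hac).symm, h5 had,
    (h6 hbd).symm, h3.2, fun h => h2.2 h.symm, h1.2⟩

lemma adj_of_not_connected_induce_compl_singleton (hP : P4Free G) (hG : G.Connected)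
    (hv : ¬(G.induce {v}ᶜ).Connected) {u : V} (hu : u ≠ v) : G.Adj v u := by
  classical
  set G' := G.induce ({v}ᶜ : Set V)
  by_contra huv
  let u' : ({v}ᶜ : Set V) := ⟨u, hu⟩
  obtain ⟨c, hc⟩ : ∃ c, ¬G'.Reachable u' c := by
    by_contra! h
    exact hv ((connected_iff_exists_forall_reachable _).mpr ⟨u', h⟩)
  -- `v` has a neighbour `x` in the component of `u` and a neighbour `w` in that of `c`; an edge
  -- `pq` of that first component leads from a neighbour to a non-neighbour of `v`, and
  -- `w - v - p - q` is an induced `P₄`.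
  obtain ⟨x, hux, hxv⟩ := hG.exists_adj_reachable_induce_compl_singleton u'
  obtain ⟨w, hcw, hwv⟩ := hG.exists_adj_reachable_induce_compl_singleton c
  obtain ⟨p⟩ := hux.symm
  obtain ⟨d, hd, hvp, hvq⟩ := p.exists_boundary_dart {y | G.Adj v y} hxv.symm huv
  have hup : G'.Reachable u' d.fst :=
    hux.trans ⟨p.takeUntil _ (p.dart_fst_mem_support_of_mem_darts hd)⟩
  have hpq : G'.Adj d.fst d.snd := d.adj
  have far : ∀ y, G'.Reachable u' y → (w : V) ≠ y ∧ ¬G.Adj w y := fun y hy =>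
    ⟨fun h => hc (hy.trans (Subtype.ext h ▸ hcw.symm)),
     fun h => hc (hy.trans ((Adj.reachable (G := G') h).symm.trans hcw.symm))⟩
  obtain ⟨hwp, hwp'⟩ := far _ hup
  obtain ⟨hwq, hwq'⟩ := far _ (hup.trans hpq.reachable)
  exact hP ⟨w, v, d.fst, d.snd, hwv.ne, hwp, hwq, hvp.ne, fun h => d.snd.2 h.symm,
    Subtype.coe_injective.ne hpq.ne, hwv, hvp, hpq, hwp', hwq', hvq⟩

theorem not_connected_or_not_connected_compl [Finite V] [Nontrivial V] (hP : P4Free G) :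
    ¬G.Connected ∨ ¬Gᶜ.Connected := by
  induction h : Nat.card V using Nat.strong_induction_on generalizing V with
  | _ n ih =>
  by_contra! ⟨hG, hGc⟩
  obtain ⟨v⟩ := hG.nonempty
  obtain ⟨w, hvw⟩ := hG.preconnected.exists_adj_of_nontrivial v
  obtain ⟨u, hvu⟩ := hGc.preconnected.exists_adj_of_nontrivial v
  have : Nontrivial ({v}ᶜ : Set V) :=
    ⟨⟨⟨w, hvw.ne'⟩, ⟨u, hvu.ne'⟩, fun h => hvu.2 (Subtype.mk.inj h ▸ hvw)⟩⟩
  have hcard : Nat.card ({v}ᶜ : Set V) < n :=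
    h ▸ Finite.card_subtype_lt (x := v) fun hv => hv rfl
  rcases ih _ hcard (hP.of_embedding (Embedding.induce _)) rfl with hv | hv
  · exact hvu.2 (hP.adj_of_not_connected_induce_compl_singleton hG hv hvu.ne')
  · rw [← induce_compl] at hv
    exact (hP.compl.adj_of_not_connected_induce_compl_singleton hGc hv hvw.ne').2 hvw

theorem exists_twins [Finite V] [Nontrivial V] (hP : P4Free G) : ∃ x y, Twins G x y := by
  induction h : Nat.card V using Nat.strong_induction_on generalizing V with
  | _ n ih =>
  wlog hG : ¬G.Connected generalizing G
  · obtain ⟨x, y, hxy⟩ :=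
      this hP.compl (hP.not_connected_or_not_connected_compl.resolve_left hG)
    exact ⟨x, y, compl_compl G ▸ hxy.compl⟩
  by_cases hc : ∃ c : G.ConnectedComponent, c.supp.Nontrivial
  · obtain ⟨c, hc⟩ := hc
    have : Nontrivial c.supp := Set.nontrivial_coe_sort.mpr hc
    obtain ⟨y, hy⟩ : ∃ y, y ∉ c.supp := by
      by_contra! hall
      exact hG ((connected_iff_exists_forall_reachable _).mpr
        ⟨_, fun z => ConnectedComponent.exact ((hall hc.nonempty.some).trans (hall z).symm)⟩)
    obtain ⟨x, y, hxy⟩ := ih _ (h ▸ Finite.card_subtype_lt (p := (· ∈ c.supp)) hy)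
      (hP.of_embedding (Embedding.induce _)) rfl
    exact ⟨x, y, hxy.of_induce fun a b ha hab => (c.mem_supp_congr_adj hab).mp ha⟩
  · push Not at hc
    obtain ⟨x, y, hxy⟩ := exists_pair_ne V
    have hbot : ∀ a b, ¬G.Adj a b := fun a b hab =>
      hab.ne (hc (G.connectedComponentMk a) rfl
        (((G.connectedComponentMk a).mem_supp_congr_adj hab).mp rfl))
    exact ⟨x, y, hxy, fun z _ _ => iff_of_false (hbot x z) (hbot y z)⟩

end P4Free

namespace IsInducedP4

variable {V : Type*} {G : SimpleGraph V} {a b c d : V}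

lemma not_twins_induce (h : IsInducedP4 G a b c d) :
    ∀ x y : ({a, b, c, d} : Set V), ¬Twins (G.induce {a, b, c, d}) x y := by
  rintro ⟨x, hx⟩ ⟨y, hy⟩ ⟨hxy, htw⟩
  have sep : ∀ z ∈ ({a, b, c, d} : Set V), z ≠ x → z ≠ y → (G.Adj x z ↔ G.Adj y z) :=
    fun z hz hzx hzy => htw ⟨z, hz⟩ (hzx <| Subtype.mk.inj ·) (hzy <| Subtype.mk.inj ·)
  obtain ⟨hab, hac, had, hbc, hbd, hcd, h1, h2, h3, h4, h5, h6⟩ := h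
  simp only [Set.mem_insert_iff, Set.mem_singleton_iff, forall_eq_or_imp, forall_eq] at hx hy sep
  rcases hx with rfl | rfl | rfl | rfl <;> rcases hy with rfl | rfl | rfl | rfl <;>
    grind [G.adj_comm]

end IsInducedP4

theorem statement0_general {V : Type*} (G : SimpleGraph V) :
    P4Free G ↔
      ∀ S : Set V, 2 ≤ S.ncard → ∃ x y : S, Twins (G.induce S) x y := by
  refine ⟨fun hP S hS => ?_, fun h ⟨a, b, c, d, hP4⟩ => ?_⟩
  · have : Finite S := (Set.finite_of_ncard_pos (by omega)).to_subtype
    have : Nontrivial S := Set.nontrivial_coe_sort.mpr (Set.one_lt_ncard_iff_nontrivial.mp hS)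
    exact (hP.of_embedding (Embedding.induce S)).exists_twins
  · obtain ⟨x, y, hxy⟩ := h {a, b, c, d}
      (Set.one_lt_ncard_iff_nontrivial.mpr ⟨a, by simp, b, by simp, hP4.1⟩)
    exact hP4.not_twins_induce x y hxy

/-- A finite graph is `P₄`-free iff every induced subgraph with at least two
vertices contains a pair of twins. -/
theorem statement0 {V : Type*} [Fintype V] (G : SimpleGraph V) :
    P4Free G ↔
      ∀ S : Set V, 2 ≤ S.ncard → ∃ x y : S, Twins (G.induce S) x y :=
  statement0_general G
end

section
/- Let σ be a permutation of {1,...,n} with σ(1)=1, and define a graph H on {2,...,n} by joining x and y (with x<y) whenever σ(x)>σ(y). If H contains a pair of twin vertices x<y, then for every w with x ≤ w ≤ y (in the linear order), σ(w) lies between min(σ(x),σ(y)) and max(σ(x),σ(y)). -/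
/-- Adjacency in the inversion graph of the permutation `σ`: `x` and `y` are
adjacent iff they form an inversion. -/
def invAdj (n : ℕ) (σ : Equiv.Perm (Fin n)) (x y : Fin n) : Prop :=
  (x < y ∧ σ y < σ x) ∨ (y < x ∧ σ x < σ y)

theorem min_le_and_le_max_of_lt_iff_lt {α : Type*} [LinearOrder α] {a b c : α}
    (h : c < a ↔ b < c) : min a b ≤ c ∧ c ≤ max a b := by
  constructor
  · by_contra hc
    rw [not_le, lt_min_iff] at hc
    exact hc.2.asymm (h.mp hc.1)
  · by_contra hc
    rw [not_le, max_lt_iff] at hc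
    exact hc.1.asymm (h.mpr hc.2)

theorem invAdj_comm {n : ℕ} {σ : Equiv.Perm (Fin n)} {x y : Fin n} :
    invAdj n σ x y ↔ invAdj n σ y x :=
  Or.comm

theorem invAdj_iff_of_lt {n : ℕ} {σ : Equiv.Perm (Fin n)} {x y : Fin n} (hxy : x < y) :
    invAdj n σ x y ↔ σ y < σ x := by
  simp only [invAdj, hxy, true_and, hxy.asymm, false_and, or_false]

theorem statement2_general (n : ℕ) [NeZero n] (σ : Equiv.Perm (Fin n))
    (x y : Fin n) (hxy : x < y)
    (htwin : ∀ z : Fin n, z ≠ 0 → z ≠ x → z ≠ y →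
      (invAdj n σ x z ↔ invAdj n σ y z)) :
    ∀ w : Fin n, x ≤ w → w ≤ y →
      min (σ x) (σ y) ≤ σ w ∧ σ w ≤ max (σ x) (σ y) := by
  intro w hxw hwy
  rcases hxw.eq_or_lt with rfl | hxw
  · exact ⟨min_le_left _ _, le_max_left _ _⟩
  rcases hwy.eq_or_lt with rfl | hwy
  · exact ⟨min_le_right _ _, le_max_right _ _⟩
  apply min_le_and_le_max_of_lt_iff_lt
  have hw0 : w ≠ 0 := ((Fin.zero_le x).trans_lt hxw).ne'
  have htwin_w := htwin w hw0 hxw.ne' hwy.ne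
  rwa [invAdj_iff_of_lt hxw, invAdj_comm, invAdj_iff_of_lt hwy] at htwin_w

/-- Twins in the inversion graph (restricted to the nonzero indices, for a
permutation fixing `0`) map intervals to intervals: if `x < y` are twins, then for
every `w` with `x ≤ w ≤ y`, `σ w` lies between `min (σ x) (σ y)` and
`max (σ x) (σ y)`. -/
theorem statement2 (n : ℕ) [NeZero n] (σ : Equiv.Perm (Fin n)) (h0 : σ 0 = 0)
    (x y : Fin n) (hx : x ≠ 0) (hy : y ≠ 0) (hxy : x < y)
    (htwin : ∀ z : Fin n, z ≠ 0 → z ≠ x → z ≠ y →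
      (invAdj n σ x z ↔ invAdj n σ y z)) :
    ∀ w : Fin n, x ≤ w → w ≤ y →
      min (σ x) (σ y) ≤ σ w ∧ σ w ≤ max (σ x) (σ y) :=
  statement2_general n σ x y hxy htwin
end

section
/- Let (G,M) be a marked permutation graph with cycle vertex sets A and A', and let a, b ∈ A. Then for all x, y ∈ A \ {a,b}: (i) a is adjacent to x in H_b if and only if b is adjacent to x in H_a; (ii) x is adjacent to y in H_b if and only if the number of edges among {bx, by, xy} present in H_a is odd (i.e., 1 or 3). -/
open SimpleGraph

universe u

/-- The Petersen graph as the Kneser graph on 2-element subsets of a 5-element set. -/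
def petersen : SimpleGraph {s : Finset (Fin 5) // s.card = 2} where
  Adj a b := a ≠ b ∧ Disjoint a.1 b.1
  symm := by
    refine ⟨fun a b h => ?_⟩
    exact ⟨h.1.symm, h.2.symm⟩
  loopless := by
    refine ⟨fun a h => ?_⟩
    exact h.1 rfl

/-- `H` is a subdivision of `K`: branch vertices are given by an injective map `f`, and
each edge of `K` corresponds to a path in `H`; these paths are internally disjoint,
their internal vertices are not branch vertices, and they cover all vertices and
edges of `H`. -/
def IsSubdivisionOf {V : Type*} {W : Type*} (H : SimpleGraph V) (K : SimpleGraph W) : Prop :=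
  ∃ (f : W → V) (P : ∀ ⦃u v : W⦄, K.Adj u v → H.Walk (f u) (f v)),
    Function.Injective f ∧
    (∀ ⦃u v⦄ (h : K.Adj u v), (P h).IsPath) ∧
    (∀ ⦃u v⦄ (h : K.Adj u v), P h.symm = (P h).reverse) ∧
    (∀ ⦃u v⦄ (h : K.Adj u v) ⦃u' v'⦄ (h' : K.Adj u' v'), s(u,v) ≠ s(u',v') →
      ∀ x, x ∈ (P h).support → x ∈ (P h').support → x = f u ∨ x = f v) ∧
    (∀ ⦃u v⦄ (h : K.Adj u v) (w : W), f w ∈ (P h).support → w = u ∨ w = v) ∧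
    (∀ x : V, ∃ (u v : W) (h : K.Adj u v), x ∈ (P h).support) ∧
    (∀ e : Sym2 V, e ∈ H.edgeSet ↔ ∃ (u v : W) (h : K.Adj u v), e ∈ (P h).edges)

/-- A marked permutation graph: a cubic graph `G` with a perfect matching `M`
(the distinguished matching) such that `G − E(M)` is the disjoint union of two
chordless cycles, with vertex sets `A` and `A'`.  The map `f` sends each vertex
to its friend, i.e. its partner in `M`. -/
structure MarkedPermGraph (V : Type u) [Fintype V] where
  G : SimpleGraph V
  M : G.Subgraph
  pm : M.IsPerfectMatching
  f : V → V
  f_adj : ∀ v, M.Adj v (f v)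
  cubic : ∀ v : V, {u | G.Adj v u}.ncard = 3
  A : Set V
  A' : Set V
  disj : Disjoint A A'
  cover : A ∪ A' = Set.univ
  A_nonempty : A.Nonempty
  A'_nonempty : A'.Nonempty
  twoReg : ∀ v : V, {u | (G.deleteEdges M.edgeSet).Adj v u}.ncard = 2
  compA : ∀ x ∈ A, ∀ y, (G.deleteEdges M.edgeSet).Reachable x y ↔ y ∈ A
  compA' : ∀ x ∈ A', ∀ y, (G.deleteEdges M.edgeSet).Reachable x y ↔ y ∈ A'
  chordless : ∀ x y, M.Adj x y → (x ∈ A ↔ y ∈ A')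

/-- `S` is the set of matching edges of an `M`-copy of the Petersen graph: five edges
of `M` such that the two cycles of `G − E(M)` together with `S` form a subdivision
of the Petersen graph. -/
def MP10 {V : Type u} [Fintype V] (P : MarkedPermGraph V) (S : Set (Sym2 V)) : Prop :=
  S ⊆ P.M.edgeSet ∧ S.ncard = 5 ∧
    IsSubdivisionOf (P.G.deleteEdges (P.M.edgeSet \ S)) petersen

/-- The 4-cycle `a-b-c-d-a` is an `M`-copy of `C₄`: the edges `ab` and `cd` belong
to the distinguished matching `M` and `bc`, `da` are edges of `G`. -/
def IsMC4 {V : Type u} [Fintype V] (P : MarkedPermGraph V) (a b c d : V) : Prop :=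
  P.M.Adj a b ∧ P.M.Adj c d ∧ P.G.Adj b c ∧ P.G.Adj d a ∧ s(a,b) ≠ s(c,d)

/-- `α` is a cyclic enumeration of the vertex set `A` of a cycle of the graph `G`. -/
def IsCycleEnum {V : Type u} (G : SimpleGraph V) (A : Set V) {m : ℕ} [NeZero m]
    (α : Fin m → V) : Prop :=
  Function.Injective α ∧ Set.range α = A ∧ ∀ i : Fin m, G.Adj (α i) (α (i + 1))

/-- Adjacency in the auxiliary graph `H_a`, where the cycles on `A` and `A'` are
enumerated by `α` (starting at `a`) and `β` (starting at the friend `a'` of `a`):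
two vertices `x` and `y` of `A \ {a}` are adjacent iff the cyclic order on `A` is
`a,x,y` while the cyclic order of their friends on `A'` is `a',y',x'` (i.e. the
matching chords `xx'` and `yy'` cross in the standard drawing). -/
def auxAdj {V : Type u} {m m' : ℕ} (f : V → V) (α : Fin m → V) (β : Fin m' → V)
    (x y : V) : Prop :=
  ∃ (i j : Fin m) (k l : Fin m'), x = α i ∧ y = α j ∧ f x = β k ∧ f y = β l ∧
    ((i < j ∧ l < k) ∨ (j < i ∧ k < l))

/-- Exactly one or all three of the propositions `p`, `q`, `r` hold, i.e. an odd
number of them. -/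
def OddCount (p q r : Prop) : Prop :=
  (p ∧ q ∧ r) ∨ (p ∧ ¬q ∧ ¬r) ∨ (¬p ∧ q ∧ ¬r) ∨ (¬p ∧ ¬q ∧ r)

/-! Cutting both cycles at `b, b'` instead of `a, a'` shifts every index by a constant, and
the relative order of two positions changes exactly when the new cut point separates them.
Hence whether `xx'` and `yy'` cross in the drawing anchored at `b` is the sum mod 2 of
whether they cross in the drawing anchored at `a` and whether `bb'` crosses `xx'` and `yy'`.
For (i), the chord `aa'` sits at the cut of the drawing anchored at `a` and crosses nothing. -/

open Function Set

theorem Fin.sub_lt_sub_right_iff_of_ne {n : ℕ} {i j s : Fin n} (hi : i ≠ s) (hj : j ≠ s) :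
    i - s < j - s ↔ ((s < i ↔ s < j) ↔ i < j) := by
  have val_sub : ∀ p : Fin n, p ≠ s →
      (s < p ∧ ((p - s : Fin n) : ℕ) = p - s) ∨ (p < s ∧ ((p - s : Fin n) : ℕ) = n + p - s) :=
    fun p hp => (lt_or_gt_of_ne hp).symm.imp
      (fun h => ⟨h, Fin.coe_sub_iff_le.2 h.le⟩) (fun h => ⟨h, Fin.coe_sub_iff_lt.2 h⟩)
  have := i.isLt
  have := j.isLt
  rcases val_sub i hi with ⟨hsi, hi'⟩ | ⟨hsi, hi'⟩ <;>
    rcases val_sub j hj with ⟨hsj, hj'⟩ | ⟨hsj, hj'⟩ <;>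
    simp only [Fin.lt_def] at * <;> omega

theorem MarkedPermGraph.f_injective {V : Type u} [Fintype V] (P : MarkedPermGraph V) :
    Injective P.f := fun u v h =>
  (P.pm.1 (P.pm.2 (P.f v))).unique (h ▸ P.f_adj u).symm (P.f_adj v).symm

theorem oddCount_iff {p q r : Prop} : OddCount p q r ↔ ((p ↔ q) ↔ r) := by
  unfold OddCount
  tauto

section auxAdj

variable {V : Type u} {m m' : ℕ} {f : V → V} {α : Fin m → V} {β : Fin m' → V}

theorem auxAdj_comm {u w : V} : auxAdj f α β u w ↔ auxAdj f α β w u := by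
  constructor <;>
  · rintro ⟨i, j, k, l, hi, hj, hk, hl, h⟩
    exact ⟨j, i, l, k, hj, hi, hl, hk, h.symm⟩

theorem auxAdj_iff (hα : Injective α) (hβ : Injective β) {u w : V} {i j : Fin m}
    {k l : Fin m'} (hi : α i = u) (hj : α j = w) (hk : β k = f u) (hl : β l = f w)
    (hkl : k ≠ l) :
    auxAdj f α β u w ↔ ¬(i < j ↔ k < l) := by
  have hij : i ≠ j := fun h => hkl (hβ (by rw [hk, hl, ← hi, ← hj, h]))
  have crossing : (i < j ∧ l < k) ∨ (j < i ∧ k < l) ↔ ¬(i < j ↔ k < l) := by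
    rcases lt_or_gt_of_ne hij with h1 | h1 <;> rcases lt_or_gt_of_ne hkl with h2 | h2 <;>
      simp [h1, h2, h1.not_gt, h2.not_gt]
  rw [← crossing]
  constructor
  · rintro ⟨i', j', k', l', rfl, rfl, hk', hl', h⟩
    obtain rfl := hα hi
    obtain rfl := hα hj
    obtain rfl := hβ (hk.trans hk')
    obtain rfl := hβ (hl.trans hl')
    exact h
  · exact fun h => ⟨i, j, k, l, hi.symm, hj.symm, hk.symm, hl.symm, h⟩

theorem not_auxAdj_anchor [NeZero m] [NeZero m'] (hα : Injective α) (hβ : Injective β)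
    (h0 : f (α 0) = β 0) (w : V) : ¬auxAdj f α β (α 0) w := by
  rintro ⟨i, j, k, l, hi, -, hk, -, h⟩
  obtain rfl := hα hi
  obtain rfl := hβ (h0.symm.trans (hi ▸ hk))
  rcases h with h | h
  · exact Fin.not_lt_zero _ h.2
  · exact Fin.not_lt_zero _ h.1

theorem auxAdj_rotate_iff [NeZero m] [NeZero m'] (hf : Injective f) (hα : Injective α)
    (hβ : Injective β) {αb : Fin m → V} {βb : Fin m' → V} {s : Fin m} {t : Fin m'}
    (hαb : ∀ p, αb p = α (p + s)) (hβb : ∀ q, βb q = β (q + t)) (hst : f (α s) = β t)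
    {u w : V} (hu : u ∈ range α) (hw : w ∈ range α) (hfu : f u ∈ range β)
    (hfw : f w ∈ range β) (hus : u ≠ α s) (hws : w ≠ α s) (huw : u ≠ w) :
    auxAdj f αb βb u w ↔
      ((auxAdj f α β (α s) u ↔ auxAdj f α β (α s) w) ↔ auxAdj f α β u w) := by
  obtain ⟨i, rfl⟩ := hu
  obtain ⟨j, rfl⟩ := hw
  obtain ⟨k, hk⟩ := hfu
  obtain ⟨l, hl⟩ := hfw
  have hαb_inj : Injective αb := fun p q h => add_right_cancel (hα (by rwa [hαb, hαb] at h))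
  have hβb_inj : Injective βb := fun p q h => add_right_cancel (hβ (by rwa [hβb, hβb] at h))
  have hkt : k ≠ t := ne_of_apply_ne β (by rw [hk, ← hst]; exact hf.ne hus)
  have hlt : l ≠ t := ne_of_apply_ne β (by rw [hl, ← hst]; exact hf.ne hws)
  have hkl : k ≠ l := ne_of_apply_ne β (by rw [hk, hl]; exact hf.ne huw)
  rw [auxAdj_iff hαb_inj hβb_inj (i := i - s) (j := j - s) (k := k - t) (l := l - t)
      (by rw [hαb, sub_add_cancel]) (by rw [hαb, sub_add_cancel])
      (by rw [hβb, sub_add_cancel, hk]) (by rw [hβb, sub_add_cancel, hl])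
      (sub_left_injective.ne hkl),
    auxAdj_iff hα hβ rfl rfl hst.symm hk hkt.symm,
    auxAdj_iff hα hβ rfl rfl hst.symm hl hlt.symm,
    auxAdj_iff hα hβ rfl rfl hk hl hkl,
    Fin.sub_lt_sub_right_iff_of_ne (ne_of_apply_ne α hus) (ne_of_apply_ne α hws),
    Fin.sub_lt_sub_right_iff_of_ne hkt hlt]
  grind

end auxAdj

theorem statement8_general {V : Type u} [Fintype V] (P : MarkedPermGraph V)
    {m m' : ℕ} [NeZero m] [NeZero m']
    (α αb : Fin m → V) (β βb : Fin m' → V) (a b : V)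
    (hab : a ≠ b)
    (hα : IsCycleEnum (P.G.deleteEdges P.M.edgeSet) P.A α) (hα0 : α 0 = a)
    (hβ : IsCycleEnum (P.G.deleteEdges P.M.edgeSet) P.A' β) (hβ0 : β 0 = P.f a)
    (hαb0 : αb 0 = b) (hβb0 : βb 0 = P.f b)
    (hrotα : ∃ s : Fin m, ∀ i, αb i = α (i + s))
    (hrotβ : ∃ s : Fin m', ∀ i, βb i = β (i + s))
    (x y : V) (hx : x ∈ P.A \ ({a, b} : Set V)) (hy : y ∈ P.A \ ({a, b} : Set V))
    (hxy : x ≠ y) :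
    (auxAdj P.f αb βb a x ↔ auxAdj P.f α β b x) ∧
    (auxAdj P.f αb βb x y ↔
      OddCount (auxAdj P.f α β b x) (auxAdj P.f α β b y) (auxAdj P.f α β x y)) := by
  obtain ⟨hα_inj, hα_range, -⟩ := hα
  obtain ⟨hβ_inj, hβ_range, -⟩ := hβ
  obtain ⟨s, hs⟩ := hrotα
  obtain ⟨t, ht⟩ := hrotβ
  obtain rfl : α s = b := by rw [← hαb0, hs, zero_add]
  have hst : P.f (α s) = β t := by rw [← hβb0, ht, zero_add]
  subst hα0
  have mem_range : ∀ v ∈ P.A, v ∈ range α := fun v hv => hα_range ▸ hv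
  have friend_mem_range : ∀ v ∈ P.A, P.f v ∈ range β :=
    fun v hv => hβ_range ▸ (P.chordless v _ (P.f_adj v)).1 hv
  obtain ⟨hxA, hxa, hxb⟩ : x ∈ P.A ∧ x ≠ α 0 ∧ x ≠ α s := by simpa [not_or] using hx
  obtain ⟨hyA, -, hyb⟩ : y ∈ P.A ∧ y ≠ α 0 ∧ y ≠ α s := by simpa [not_or] using hy
  have rotate {u w : V} := auxAdj_rotate_iff P.f_injective hα_inj hβ_inj hs ht hst
    (u := u) (w := w)
  have anchor := not_auxAdj_anchor hα_inj hβ_inj hβ0.symm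
  constructor
  · rw [rotate ⟨0, rfl⟩ (mem_range x hxA) ⟨0, hβ0⟩ (friend_mem_range x hxA) hab hxb hxa.symm,
      auxAdj_comm (u := α s)]
    simp only [anchor, false_iff, iff_false, not_not]
  · rw [rotate (mem_range x hxA) (mem_range y hyA) (friend_mem_range x hxA)
      (friend_mem_range y hyA) hxb hyb hxy, oddCount_iff]

/-- Redrawing lemma: for anchors `a, b` on the cycle `A` (with `H_b` defined from the
enumerations obtained by rotating those of `H_a`), (i) `ax ∈ H_b` iff `bx ∈ H_a`,
and (ii) `xy ∈ H_b` iff an odd number (1 or 3) of the edges `bx, by, xy` lie in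
`H_a`. -/
theorem statement8 {V : Type u} [Fintype V] (P : MarkedPermGraph V)
    {m m' : ℕ} [NeZero m] [NeZero m']
    (α αb : Fin m → V) (β βb : Fin m' → V) (a b : V)
    (ha : a ∈ P.A) (hb : b ∈ P.A) (hab : a ≠ b)
    (hα : IsCycleEnum (P.G.deleteEdges P.M.edgeSet) P.A α) (hα0 : α 0 = a)
    (hβ : IsCycleEnum (P.G.deleteEdges P.M.edgeSet) P.A' β) (hβ0 : β 0 = P.f a)
    (hαb0 : αb 0 = b) (hβb0 : βb 0 = P.f b)
    (hrotα : ∃ s : Fin m, ∀ i, αb i = α (i + s))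
    (hrotβ : ∃ s : Fin m', ∀ i, βb i = β (i + s))
    (x y : V) (hx : x ∈ P.A \ ({a, b} : Set V)) (hy : y ∈ P.A \ ({a, b} : Set V))
    (hxy : x ≠ y) :
    (auxAdj P.f αb βb a x ↔ auxAdj P.f α β b x) ∧
    (auxAdj P.f αb βb x y ↔
      OddCount (auxAdj P.f α β b x) (auxAdj P.f α β b y) (auxAdj P.f α β x y)) :=
  statement8_general P α αb β βb a b hab hα hα0 hβ hβ0 hαb0 hβb0 hrotα hrotβ x y hx hy hxy
end

section
/- Let σ be a permutation of {0,1,...,n-1} viewed as relating two cyclic orders, and for each anchor a define H_a as the graph on the remaining indices where x,y are adjacent iff the chords x-σ(x) and y-σ(y) cross when the cyclic orders are cut at a and σ(a). Then for anchors a, b and indices x, y distinct from a, b: xy ∈ H_b if and only if |{bx, by, xy} ∩ E(H_a)| ∈ {1,3}. -/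
/-- The chords `x-σ(x)` and `y-σ(y)` cross relative to the anchor `a`: cutting the
two cyclic orders at `a` and `σ a` (via cyclic subtraction), `x` precedes `y` while
`σ y` precedes `σ x`, or vice versa. -/
def crossAdj (n : ℕ) (σ : Equiv.Perm (Fin n)) (a x y : Fin n) : Prop :=
  (x - a < y - a ∧ σ y - σ a < σ x - σ a) ∨
  (y - a < x - a ∧ σ x - σ a < σ y - σ a)

/-! Crossing relative to an anchor is the exclusive or of "`x` before `y`" in the two
cyclic orders cut at the anchor. Moving the cut from `a` to `b` reverses the order of `x`
and `y` exactly when `b` separates them, i.e. when exactly one of them comes before `b`.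
Modulo 2 the order at `b` is therefore the sum of the orders at `a` of the pairs `xy`,
`xb`, `yb`, and the same holds in the second cyclic order, so adding up, the crossing of
`xy` at `b` is the sum of the crossings of `xy`, `bx`, `by` at `a`. -/

namespace Fin

variable {n : ℕ}

theorem val_sub_cases (u c : Fin n) :
    (c ≤ u ∧ (u - c).val = u.val - c.val) ∨ (u < c ∧ (u - c).val = n + u.val - c.val) := by
  rcases le_or_gt c u with h | h
  · exact .inl ⟨h, coe_sub_iff_le.mpr h⟩
  · exact .inr ⟨h, coe_sub_iff_lt.mpr h⟩

theorem sub_lt_sub_iff_not_lt {x y : Fin n} (c : Fin n) (hxy : x ≠ y) :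
    y - c < x - c ↔ ¬x - c < y - c := by
  have := val_sub_cases x c
  have := val_sub_cases y c
  have := val_ne_of_ne hxy
  simp only [lt_def, le_def] at *
  omega

theorem sub_lt_sub_iff_change_anchor (a b x y : Fin n) :
    x - b < y - b ↔ (x - a < y - a ↔ (x - a < b - a ↔ y - a < b - a)) := by
  have := val_sub_cases x a
  have := val_sub_cases y a
  have := val_sub_cases b a
  have := val_sub_cases x b
  have := val_sub_cases y b
  simp only [lt_def, le_def] at *
  omega

end Fin

section crossAdj

variable {n : ℕ} (σ : Equiv.Perm (Fin n)) (a : Fin n)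

theorem crossAdj_comm (x y : Fin n) : crossAdj n σ a x y ↔ crossAdj n σ a y x :=
  or_comm

theorem crossAdj_iff_xor (x y : Fin n) :
    crossAdj n σ a x y ↔ Xor (x - a < y - a) (σ x - σ a < σ y - σ a) := by
  rcases eq_or_ne x y with rfl | hxy
  · simp [crossAdj]
  rw [crossAdj, Fin.sub_lt_sub_iff_not_lt a hxy,
    Fin.sub_lt_sub_iff_not_lt (σ a) (σ.injective.ne hxy.symm), Xor]
  tauto

end crossAdj

theorem statement9_general (n : ℕ) (σ : Equiv.Perm (Fin n)) (a b x y : Fin n) :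
    crossAdj n σ b x y ↔
      OddCount (crossAdj n σ a b x) (crossAdj n σ a b y) (crossAdj n σ a x y) := by
  rw [crossAdj_comm σ a b x, crossAdj_comm σ a b y, crossAdj_iff_xor σ b,
    crossAdj_iff_xor σ a x b, crossAdj_iff_xor σ a y b, crossAdj_iff_xor σ a x y,
    Fin.sub_lt_sub_iff_change_anchor a b x y,
    Fin.sub_lt_sub_iff_change_anchor (σ a) (σ b) (σ x) (σ y)]
  unfold OddCount
  grind

/-- Redrawing lemma, combinatorial version: for anchors `a`, `b` and indices
`x`, `y` distinct from them, `xy ∈ H_b` iff an odd number (1 or 3) of the edges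
`bx`, `by`, `xy` lie in `H_a`. -/
theorem statement9 (n : ℕ) (σ : Equiv.Perm (Fin n)) (a b x y : Fin n)
    (hab : a ≠ b) (hxa : x ≠ a) (hxb : x ≠ b) (hya : y ≠ a) (hyb : y ≠ b)
    (hxy : x ≠ y) :
    crossAdj n σ b x y ↔
      OddCount (crossAdj n σ a b x) (crossAdj n σ a b y) (crossAdj n σ a x y) :=
  statement9_general n σ a b x y
end

section
/- Let H be a graph and b a vertex of H such that no induced 4-vertex path of H contains b. Let U1 = N_H(b) and U2 = V(H) \ (U1 ∪ {b}). Then: (i) if x,y ∈ U1 with xy ∉ E(H) and z ∈ U2, then xz ∈ E(H) iff yz ∈ E(H); and (ii) if x,y ∈ U2 with xy ∈ E(H) and z ∈ U1, then xz ∈ E(H) iff yz ∈ E(H). -/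
open SimpleGraph

/-!
If two non-adjacent neighbours `x, y` of `b` disagreed on some `z` outside `N[b]`, then
`z - x - b - y` would be an induced `P₄` through `b`; if two adjacent vertices `x, y` outside
`N[b]` disagreed on some neighbour `z` of `b`, then `y - x - z - b` would be one.
-/

namespace SimpleGraph

variable {V : Type*} (H : SimpleGraph V)

lemma isInducedP4_of_nonadj_neighbors {b x y z : V} (hx : H.Adj b x) (hy : H.Adj b y)
    (hxy : ¬ H.Adj x y) (hne : x ≠ y) (hz : ¬ H.Adj b z) (hzb : z ≠ b)
    (hxz : H.Adj x z) (hyz : ¬ H.Adj y z) :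
    IsInducedP4 H z x b y :=
  ⟨hxz.ne.symm, hzb, fun h => hxy (h ▸ hxz), hx.ne.symm, hne, hy.ne,
    hxz.symm, hx.symm, hy, fun h => hz h.symm, fun h => hyz h.symm, hxy⟩

lemma isInducedP4_of_adj_nonneighbors {b x y z : V} (hx : ¬ H.Adj b x) (hy : ¬ H.Adj b y)
    (hxb : x ≠ b) (hyb : y ≠ b) (hxy : H.Adj x y) (hz : H.Adj b z)
    (hxz : H.Adj x z) (hyz : ¬ H.Adj y z) :
    IsInducedP4 H y x z b :=
  ⟨hxy.ne.symm, fun h => hy (h ▸ hz), hyb, hxz.ne, hxb, hz.ne.symm,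
    hxy.symm, hxz, hz.symm, hyz, fun h => hy h.symm, fun h => hx h.symm⟩

end SimpleGraph

/-- If no induced `P₄` of `H` contains the vertex `b`, then non-adjacent pairs in
`N(b)` and adjacent pairs outside `N(b) ∪ {b}` have identical adjacency to the
other side. -/
theorem statement10 {V : Type*} (H : SimpleGraph V) (b : V)
    (hb : ¬ ∃ p q r s : V, IsInducedP4 H p q r s ∧ b ∈ ({p, q, r, s} : Set V)) :
    (∀ x y z : V, x ∈ H.neighborSet b → y ∈ H.neighborSet b →
      ¬ H.Adj x y → z ∉ H.neighborSet b → z ≠ b → x ≠ y →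
      (H.Adj x z ↔ H.Adj y z)) ∧
    (∀ x y z : V, x ∉ H.neighborSet b → y ∉ H.neighborSet b → x ≠ b → y ≠ b →
      H.Adj x y → z ∈ H.neighborSet b →
      (H.Adj x z ↔ H.Adj y z)) := by
  simp only [mem_neighborSet]
  constructor
  · intro x y z hx hy hxy hz hzb hne
    constructor
    · exact fun hxz => by_contra fun hyz => hb ⟨z, x, b, y,
        H.isInducedP4_of_nonadj_neighbors hx hy hxy hne hz hzb hxz hyz, by simp⟩
    · exact fun hyz => by_contra fun hxz => hb ⟨z, y, b, x,
        H.isInducedP4_of_nonadj_neighbors hy hx (hxy ∘ Adj.symm) hne.symm hz hzb hyz hxz,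
        by simp⟩
  · intro x y z hx hy hxb hyb hxy hz
    constructor
    · exact fun hxz => by_contra fun hyz => hb ⟨y, x, z, b,
        H.isInducedP4_of_adj_nonneighbors hx hy hxb hyb hxy hz hxz hyz, by simp⟩
    · exact fun hyz => by_contra fun hxz => hb ⟨x, y, z, b,
        H.isInducedP4_of_adj_nonneighbors hy hx hyb hxb hxy.symm hz hyz hxz, by simp⟩
end

section
/- Let H be a graph, b a vertex contained in no induced P4 of H, U1 = N_H(b), and suppose {u,w,x,y} ⊆ V(H) \ {b} induces a path u-w-x-y in H. Then {u,w,x,y} ∩ U1 is one of ∅, {w,x}, or {u,w,x,y}. -/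
/-
Whether `b` is adjacent to the ends and to the middle of the path `u-w-x-y` gives sixteen
patterns. Each pattern other than "none", "the two middle vertices" and "all four" lets `b`
replace or extend a piece of the path to an induced `P₄` through `b`, namely one of
`b-u-w-x`, `b-w-x-y`, `w-u-b-y`, `u-b-x-y` or the mirror image of one of them.
-/

open SimpleGraph

namespace IsInducedP4

variable {V : Type*} {H : SimpleGraph V} {b u w x y : V}

theorem reverse (h : IsInducedP4 H u w x y) : IsInducedP4 H y x w u := by
  obtain ⟨huw, hux, huy, hwx, hwy, hxy, auw, awx, axy, nux, nuy, nwy⟩ := h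
  exact ⟨hxy.symm, hwy.symm, huy.symm, hwx.symm, hux.symm, huw.symm,
    axy.symm, awx.symm, auw.symm, fun h => nwy h.symm, fun h => nuy h.symm,
    fun h => nux h.symm⟩

theorem prepend_first (h : IsInducedP4 H u w x y)
    (hbu : H.Adj b u) (hbw : ¬ H.Adj b w) (hbx : ¬ H.Adj b x) :
    IsInducedP4 H b u w x := by
  obtain ⟨huw, hux, -, hwx, -, -, auw, awx, -, nux, -, -⟩ := h
  refine ⟨hbu.ne, ?_, ?_, huw, hux, hwx, hbu, auw, awx, hbw, hbx, nux⟩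
  · rintro rfl; exact hbx awx
  · rintro rfl; exact nux hbu.symm

theorem prepend_second (h : IsInducedP4 H u w x y)
    (hbw : H.Adj b w) (hbx : ¬ H.Adj b x) (hby : ¬ H.Adj b y) :
    IsInducedP4 H b w x y := by
  obtain ⟨-, -, -, hwx, hwy, hxy, -, awx, axy, -, -, nwy⟩ := h
  refine ⟨hbw.ne, ?_, ?_, hwx, hwy, hxy, hbw, awx, axy, hbx, hby, nwy⟩
  · rintro rfl; exact hby axy
  · rintro rfl; exact hbx axy.symm

theorem bridge_ends (h : IsInducedP4 H u w x y)
    (hbu : H.Adj b u) (hby : H.Adj b y) (hbw : ¬ H.Adj b w) :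
    IsInducedP4 H w u b y := by
  obtain ⟨huw, -, huy, -, hwy, -, auw, -, -, -, nuy, nwy⟩ := h
  refine ⟨huw.symm, ?_, hwy, hbu.ne.symm, huy, hby.ne, auw.symm, hbu.symm, hby,
    fun h => hbw h.symm, nwy, nuy⟩
  rintro rfl; exact nwy hby

theorem replace_second (h : IsInducedP4 H u w x y)
    (hbu : H.Adj b u) (hbx : H.Adj b x) (hby : ¬ H.Adj b y) :
    IsInducedP4 H u b x y := by
  obtain ⟨-, hux, huy, -, -, hxy, -, -, axy, nux, nuy, -⟩ := h
  refine ⟨hbu.ne.symm, hux, huy, hbx.ne, ?_, hxy, hbu.symm, hbx, axy, nux, nuy, hby⟩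
  rintro rfl; exact nuy hbu.symm

end IsInducedP4

def OnInducedP4 {V : Type*} (H : SimpleGraph V) (b : V) : Prop :=
  ∃ p q r s : V, IsInducedP4 H p q r s ∧ b ∈ ({p, q, r, s} : Set V)

section

variable {V : Type*} {H : SimpleGraph V} {b u w x y : V}

theorem forbidden_adj_patterns (hb : ¬ OnInducedP4 H b) (h : IsInducedP4 H u w x y) :
    (H.Adj b u → H.Adj b w ∨ H.Adj b x) ∧ (H.Adj b w → H.Adj b x ∨ H.Adj b y) ∧
      (H.Adj b u → H.Adj b y → H.Adj b w) ∧ (H.Adj b u → H.Adj b x → H.Adj b y) := by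
  refine ⟨fun hbu => ?_, fun hbw => ?_, fun hbu hby => ?_, fun hbu hbx => ?_⟩ <;>
    by_contra! hbad
  · exact hb ⟨_, _, _, _, h.prepend_first hbu hbad.1 hbad.2, by simp⟩
  · exact hb ⟨_, _, _, _, h.prepend_second hbw hbad.1 hbad.2, by simp⟩
  · exact hb ⟨_, _, _, _, h.bridge_ends hbu hby hbad, by simp⟩
  · exact hb ⟨_, _, _, _, h.replace_second hbu hbx hbad, by simp⟩

theorem adj_pattern_of_not_onInducedP4 (hb : ¬ OnInducedP4 H b) (h : IsInducedP4 H u w x y) :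
    (¬ H.Adj b u ∧ ¬ H.Adj b w ∧ ¬ H.Adj b x ∧ ¬ H.Adj b y) ∨
      (¬ H.Adj b u ∧ H.Adj b w ∧ H.Adj b x ∧ ¬ H.Adj b y) ∨
      (H.Adj b u ∧ H.Adj b w ∧ H.Adj b x ∧ H.Adj b y) := by
  obtain ⟨hu_wx, hw_xy, hu_y_w, hu_x_y⟩ := forbidden_adj_patterns hb h
  obtain ⟨hy_xw, hx_wu, hy_u_x, hy_w_u⟩ := forbidden_adj_patterns hb h.reverse
  by_cases hu : H.Adj b u <;> by_cases hy : H.Adj b y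
  · exact .inr (.inr ⟨hu, hu_y_w hu hy, hy_u_x hy hu, hy⟩)
  · have hx : ¬ H.Adj b x := fun hx => hy (hu_x_y hu hx)
    have hw : H.Adj b w := (hu_wx hu).resolve_right hx
    exact absurd ((hw_xy hw).resolve_right hy) hx
  · have hw : ¬ H.Adj b w := fun hw => hu (hy_w_u hy hw)
    have hx : H.Adj b x := (hy_xw hy).resolve_right hw
    exact absurd ((hx_wu hx).resolve_right hu) hw
  · by_cases hw : H.Adj b w
    · exact .inr (.inl ⟨hu, hw, (hw_xy hw).resolve_right hy, hy⟩)
    · exact .inl ⟨hu, hw, fun hx => hw ((hx_wu hx).resolve_right hu), hy⟩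

end

theorem statement11_general {V : Type*} (H : SimpleGraph V) (b : V)
    (hb : ¬ ∃ p q r s : V, IsInducedP4 H p q r s ∧ b ∈ ({p, q, r, s} : Set V))
    (u w x y : V)
    (hpath : IsInducedP4 H u w x y) :
    ({u, w, x, y} : Set V) ∩ H.neighborSet b ∈
      ({∅, {w, x}, {u, w, x, y}} : Set (Set V)) := by
  rcases adj_pattern_of_not_onInducedP4 hb hpath with
    ⟨hu, hw, hx, hy⟩ | ⟨hu, hw, hx, hy⟩ | ⟨hu, hw, hx, hy⟩ <;>
  simp [Set.insert_inter_of_mem, Set.insert_inter_of_notMem, hu, hw, hx, hy]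

/-- If no induced `P₄` of `H` contains `b` and `u-w-x-y` is an induced path avoiding
`b`, then `{u,w,x,y} ∩ N(b)` is `∅`, `{w,x}`, or `{u,w,x,y}`. -/
theorem statement11 {V : Type*} (H : SimpleGraph V) (b : V)
    (hb : ¬ ∃ p q r s : V, IsInducedP4 H p q r s ∧ b ∈ ({p, q, r, s} : Set V))
    (u w x y : V) (hu : u ≠ b) (hw : w ≠ b) (hx : x ≠ b) (hy : y ≠ b)
    (hpath : IsInducedP4 H u w x y) :
    ({u, w, x, y} : Set V) ∩ H.neighborSet b ∈
      ({∅, {w, x}, {u, w, x, y}} : Set (Set V)) :=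
  statement11_general H b hb u w x y hpath
end

section
/- Let σ be a permutation of {1,...,n} with σ(1)=1, and let H be its inversion graph restricted to {2,...,n} (x<y adjacent iff σ(x)>σ(y)). Suppose x-y-z-w is an induced path in H with x in the interval between 1 and y and σ(y) < σ(x). Then either (Case 1) z lies between 1 and x, σ(z) lies strictly between σ(y) and σ(x), and w lies between z and x with σ(w) < σ(y); or (Case 2) z lies between x and y with σ(z) > σ(x), and w > y with σ(x) < σ(w) < σ(z). -/
open Function

namespace InversionGraph

section Preorder

variable {α β : Type*} [Preorder α] [Preorder β] {f : α → β} {a b c : α}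

def Inverted (f : α → β) (a b : α) : Prop := a < b ∧ f b < f a

def Aligned (f : α → β) (a b : α) : Prop := a < b ∧ f a < f b

theorem Inverted.trans (hab : Inverted f a b) (hbc : Inverted f b c) : Inverted f a c :=
  ⟨hab.1.trans hbc.1, hbc.2.trans hab.2⟩

theorem Aligned.trans (hab : Aligned f a b) (hbc : Aligned f b c) : Aligned f a c :=
  ⟨hab.1.trans hbc.1, hab.2.trans hbc.2⟩

theorem Aligned.not_inverted (h : Aligned f a b) : ¬Inverted f a b :=
  fun h' => lt_asymm h.2 h'.2

def _root_.inversionGraph (f : α → β) : SimpleGraph α where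
  Adj a b := Inverted f a b ∨ Inverted f b a
  symm := ⟨fun _ _ => Or.symm⟩
  loopless := ⟨fun a h => h.elim (fun h => lt_irrefl a h.1) (fun h => lt_irrefl a h.1)⟩

theorem _root_.inversionGraph_adj : (inversionGraph f).Adj a b ↔ Inverted f a b ∨ Inverted f b a :=
  Iff.rfl

theorem Inverted.adj (h : Inverted f a b) : (inversionGraph f).Adj a b :=
  inversionGraph_adj.2 (.inl h)

theorem inverted_of_adj_right_of_not_adj (hab : Inverted f a b)
    (hbc : (inversionGraph f).Adj b c) (hac : ¬(inversionGraph f).Adj a c) : Inverted f c b :=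
  (inversionGraph_adj.1 hbc).resolve_left fun hbc => hac (hab.trans hbc).adj

theorem inverted_of_adj_left_of_not_adj (hab : Inverted f a b)
    (hac : (inversionGraph f).Adj a c) (hbc : ¬(inversionGraph f).Adj b c) : Inverted f a c :=
  (inversionGraph_adj.1 hac).resolve_right fun hca => hbc (hca.trans hab).adj.symm

end Preorder

section LinearOrder

variable {α β : Type*} [LinearOrder α] [LinearOrder β] {f : α → β} {a b : α}

theorem aligned_or_aligned_of_not_adj (hf : Injective f) (hne : a ≠ b)
    (h : ¬(inversionGraph f).Adj a b) : Aligned f a b ∨ Aligned f b a := by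
  rw [inversionGraph_adj, not_or] at h
  rcases hne.lt_or_gt with hab | hba
  · exact .inl ⟨hab, (not_lt.1 fun h' => h.1 ⟨hab, h'⟩).lt_of_ne (hf.ne hne)⟩
  · exact .inr ⟨hba, (not_lt.1 fun h' => h.2 ⟨hba, h'⟩).lt_of_ne (hf.ne hne.symm)⟩

theorem induced_path_cases (hf : Injective f) {x y z w : α} (hxy : Inverted f x y)
    (hyz : (inversionGraph f).Adj y z) (hzw : (inversionGraph f).Adj z w)
    (hxz : ¬(inversionGraph f).Adj x z) (hxw : ¬(inversionGraph f).Adj x w)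
    (hyw : ¬(inversionGraph f).Adj y w) :
    Inverted f z y ∧ Inverted f z w ∧
      (Aligned f z x ∧ Aligned f w x ∧ Aligned f w y ∨
        Aligned f x z ∧ Aligned f x w ∧ Aligned f y w) := by
  have inv_zy := inverted_of_adj_right_of_not_adj hxy hyz hxz
  have inv_zw := inverted_of_adj_left_of_not_adj inv_zy hzw hyw
  have x_ne_z : x ≠ z := by rintro rfl; exact hxw hzw
  have x_ne_w : x ≠ w := by rintro rfl; exact hxz hzw.symm
  have y_ne_w : y ≠ w := by rintro rfl; exact hxw hxy.adj
  refine ⟨inv_zy, inv_zw, ?_⟩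
  rcases aligned_or_aligned_of_not_adj hf x_ne_z hxz with al_xz | al_zx
  · have al_xw := (aligned_or_aligned_of_not_adj hf x_ne_w hxw).resolve_right
      fun al_wx => lt_asymm (al_wx.trans al_xz).1 inv_zw.1
    have al_yw := (aligned_or_aligned_of_not_adj hf y_ne_w hyw).resolve_right
      fun al_wy => (al_xw.trans al_wy).not_inverted hxy
    exact .inr ⟨al_xz, al_xw, al_yw⟩
  · have al_wx := (aligned_or_aligned_of_not_adj hf x_ne_w hxw).resolve_left
      fun al_xw => (al_zx.trans al_xw).not_inverted inv_zw
    have al_wy := (aligned_or_aligned_of_not_adj hf y_ne_w hyw).resolve_left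
      fun al_yw => lt_asymm (al_yw.trans al_wx).1 hxy.1
    exact .inl ⟨al_zx, al_wx, al_wy⟩

end LinearOrder

end InversionGraph

theorem invAdj_eq_inversionGraph_adj (n : ℕ) (σ : Equiv.Perm (Fin n)) :
    invAdj n σ = (inversionGraph σ).Adj :=
  rfl

theorem statement16_general (n : ℕ) (σ : Equiv.Perm (Fin n))
    (x y z w : Fin n)
    (p2 : invAdj n σ y z) (p3 : invAdj n σ z w)
    (n1 : ¬ invAdj n σ x z) (n2 : ¬ invAdj n σ x w) (n3 : ¬ invAdj n σ y w)
    (hlt : x < y) (hσ : σ y < σ x) :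
    (z < x ∧ σ y < σ z ∧ σ z < σ x ∧ z < w ∧ w < x ∧ σ w < σ y) ∨
    (x < z ∧ z < y ∧ σ x < σ z ∧ y < w ∧ σ x < σ w ∧ σ w < σ z) := by
  rw [invAdj_eq_inversionGraph_adj] at p2 p3 n1 n2 n3
  obtain ⟨hzy, hzw, ⟨hzx, hwx, hwy⟩ | ⟨hxz, hxw, hyw⟩⟩ :=
    InversionGraph.induced_path_cases σ.injective ⟨hlt, hσ⟩ p2 p3 n1 n2 n3
  · exact .inl ⟨hzx.1, hzy.2, hzx.2, hzw.1, hwx.1, hwy.2⟩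
  · exact .inr ⟨hxz.1, hzy.1, hxz.2, hyw.1, hxw.2, hzw.2⟩

/-- Case analysis for an induced path `x-y-z-w` in the inversion graph of a
permutation fixing `0` (restricted to nonzero indices), where `x < y` and
`σ y < σ x`: either Case 1 or Case 2 of the proof of the key lemma occurs. -/
theorem statement16 (n : ℕ) [NeZero n] (σ : Equiv.Perm (Fin n)) (h0 : σ 0 = 0)
    (x y z w : Fin n)
    (hx0 : x ≠ 0) (hy0 : y ≠ 0) (hz0 : z ≠ 0) (hw0 : w ≠ 0)
    (hxy : x ≠ y) (hxz : x ≠ z) (hxw : x ≠ w) (hyz : y ≠ z) (hyw : y ≠ w)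
    (hzw : z ≠ w)
    (p1 : invAdj n σ x y) (p2 : invAdj n σ y z) (p3 : invAdj n σ z w)
    (n1 : ¬ invAdj n σ x z) (n2 : ¬ invAdj n σ x w) (n3 : ¬ invAdj n σ y w)
    (hlt : x < y) (hσ : σ y < σ x) :
    (z < x ∧ σ y < σ z ∧ σ z < σ x ∧ z < w ∧ w < x ∧ σ w < σ y) ∨
    (x < z ∧ z < y ∧ σ x < σ z ∧ y < w ∧ σ x < σ w ∧ σ w < σ z) :=
  statement16_general n σ x y z w p2 p3 n1 n2 n3 hlt hσ
end

section
/- Let σ be a permutation of {1,...,n} with σ(1) = 1, n ≥ 4, and suppose that the inversion graph of σ restricted to {2,...,n} has no pair of twin vertices. Then σ contains one of the patterns 2413 or 3142 among entries with index ≥ 2. -/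
/-- `σ` contains the pattern given by `τ : Fin 4 → Fin 4`. -/
def ContainsPattern (n : ℕ) (σ : Equiv.Perm (Fin n)) (τ : Fin 4 → Fin 4) : Prop :=
  ∃ f : Fin 4 → Fin n, StrictMono f ∧ ∀ i j : Fin 4, τ i < τ j ↔ σ (f i) < σ (f j)

/-- The pattern 2413 (0-indexed as 1,3,0,2). -/
def pat2413 : Fin 4 → Fin 4 := ![1, 3, 0, 2]

/-- The pattern 3142 (0-indexed as 2,0,3,1). -/
def pat3142 : Fin 4 → Fin 4 := ![2, 0, 3, 1]

/-! A graph with no induced `P₄` on at least two vertices has twins. By Seinsche's theorem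
either the graph or its complement is disconnected: adding a vertex `v` to a disconnected
`P₄`-free graph keeps it disconnected unless `v` sees everything, since otherwise a
non-neighbour and a neighbour of `v` that are adjacent, together with a neighbour of `v` in
another part, would span an induced `P₄`. Twins of a part with no edges to the rest are twins of
the whole graph, and complementation preserves both twins and `P₄`-freeness, so induction applies.
Hence the twin-free inversion graph on the nonzero positions has an induced `P₄`, and the only
arrangements of four positions whose inversion graph is `P₄` are `2413` and `3142`. -/

open Finset

namespace SimpleGraph

variable {V : Type*} {G : SimpleGraph V}

def HasInducedP4On (G : SimpleGraph V) (s : Finset V) : Prop :=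
  ∃ a ∈ s, ∃ b ∈ s, ∃ c ∈ s, ∃ d ∈ s,
    G.Adj a b ∧ G.Adj b c ∧ G.Adj c d ∧ ¬G.Adj a c ∧ ¬G.Adj a d ∧ ¬G.Adj b d

def HasTwinsOn (G : SimpleGraph V) (s : Finset V) : Prop :=
  ∃ x ∈ s, ∃ y ∈ s, x ≠ y ∧ ∀ z ∈ s, z ≠ x → z ≠ y → (G.Adj x z ↔ G.Adj y z)

def IsDisconnectedOn [DecidableEq V] (G : SimpleGraph V) (s : Finset V) : Prop :=
  ∃ A ⊆ s, A.Nonempty ∧ (s \ A).Nonempty ∧ ∀ a ∈ A, ∀ b ∈ s \ A, ¬G.Adj a b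

lemma ne_of_induced_P4 {a b c d : V} (hab : G.Adj a b) (hcd : G.Adj c d)
    (hac : ¬G.Adj a c) (had : ¬G.Adj a d) :
    a ≠ c ∧ a ≠ d ∧ b ≠ d := by
  refine ⟨?_, ?_, ?_⟩ <;> rintro rfl
  · exact had hcd
  · exact hac hcd.symm
  · exact had hab

lemma HasInducedP4On.mono {s t : Finset V} (h : G.HasInducedP4On s) (hst : s ⊆ t) :
    G.HasInducedP4On t := by
  obtain ⟨a, ha, b, hb, c, hc, d, hd, hP⟩ := h
  exact ⟨a, hst ha, b, hst hb, c, hst hc, d, hst hd, hP⟩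

/-- `P₄` is self-complementary: `a b c d` in `Gᶜ` is `b d a c` in `G`. -/
lemma HasInducedP4On.of_compl {s : Finset V} (h : Gᶜ.HasInducedP4On s) :
    G.HasInducedP4On s := by
  obtain ⟨a, ha, b, hb, c, hc, d, hd, hab, hbc, hcd, hac, had, hbd⟩ := h
  obtain ⟨hne_ac, hne_ad, hne_bd⟩ := ne_of_induced_P4 hab hcd hac had
  simp only [compl_adj, not_and, not_not] at hab hbc hcd hac had hbd
  exact ⟨b, hb, d, hd, a, ha, c, hc, hbd hne_bd, (had hne_ad).symm, hac hne_ac,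
    fun h => hab.2 h.symm, hbc.2, fun h => hcd.2 h.symm⟩

@[simp]
lemma hasInducedP4On_compl {s : Finset V} : Gᶜ.HasInducedP4On s ↔ G.HasInducedP4On s :=
  ⟨.of_compl, fun h => .of_compl (by rwa [compl_compl])⟩

lemma HasTwinsOn.compl {s : Finset V} (h : G.HasTwinsOn s) : Gᶜ.HasTwinsOn s := by
  obtain ⟨x, hx, y, hy, hxy, htw⟩ := h
  refine ⟨x, hx, y, hy, hxy, fun z hz hzx hzy => ?_⟩
  simp [compl_adj, hzx.symm, hzy.symm, htw z hz hzx hzy]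

@[simp]
lemma hasTwinsOn_compl {s : Finset V} : Gᶜ.HasTwinsOn s ↔ G.HasTwinsOn s :=
  ⟨fun h => by simpa using h.compl, .compl⟩

lemma hasTwinsOn_of_card_eq_two {s : Finset V} (hs : #s = 2) : G.HasTwinsOn s := by
  classical
  obtain ⟨x, y, hxy, rfl⟩ := card_eq_two.mp hs
  refine ⟨x, by simp, y, by simp, hxy, fun z hz hzx hzy => ?_⟩
  simp_all

section Disconnected

variable [DecidableEq V]

lemma isDisconnectedOn_pair {x y : V} (hxy : x ≠ y) (h : ¬G.Adj x y) :
    G.IsDisconnectedOn {x, y} := by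
  refine ⟨{x}, by simp, singleton_nonempty x, ⟨y, by simp [hxy.symm]⟩, ?_⟩
  simp only [mem_singleton, mem_sdiff, mem_insert]
  rintro a rfl b ⟨rfl | rfl, hb⟩
  exacts [absurd rfl hb, h]

/-- If `v` sees some `b ∈ Q`, an edge from a non-neighbour `m` of `v` in `P` to a neighbour `y`
of `v` in `P` would give the induced path `m y v b`; so the non-neighbours of `v` in `P` split
off, and otherwise `Q` does. -/
lemma isDisconnectedOn_of_not_adj {s P Q : Finset V} {v x : V} (hP4 : ¬G.HasInducedP4On s)
    (hv : v ∈ s) (hPs : P ⊆ s) (hQs : Q ⊆ s) (hvQ : v ∉ Q) (hQ : Q.Nonempty)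
    (hcover : ∀ y ∈ s, y ≠ v → y ∈ P ∨ y ∈ Q) (hPQ : ∀ p ∈ P, ∀ q ∈ Q, ¬G.Adj p q)
    (hx : x ∈ P) (hvx : ¬G.Adj v x) : G.IsDisconnectedOn s := by
  classical
  by_cases hb : ∃ b ∈ Q, G.Adj v b
  · obtain ⟨b, hbQ, hvb⟩ := hb
    refine ⟨P.filter (¬G.Adj v ·), (filter_subset _ _).trans hPs, ⟨x, mem_filter.2 ⟨hx, hvx⟩⟩,
      ⟨b, mem_sdiff.2 ⟨hQs hbQ, fun h => (mem_filter.1 h).2 hvb⟩⟩, ?_⟩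
    simp only [mem_sdiff, mem_filter, not_and, not_not]
    rintro m ⟨hmP, hvm⟩ y ⟨hys, hyM⟩ hmy
    obtain rfl | hyv := eq_or_ne y v
    · exact hvm hmy.symm
    rcases hcover y hys hyv with hyP | hyQ
    · exact hP4 ⟨m, hPs hmP, y, hys, v, hv, b, hQs hbQ, hmy, (hyM hyP).symm, hvb,
        fun h => hvm h.symm, hPQ m hmP b hbQ, hPQ y hyP b hbQ⟩
    · exact hPQ m hmP y hyQ hmy
  · push Not at hb
    refine ⟨Q, hQs, hQ, ⟨v, mem_sdiff.2 ⟨hv, hvQ⟩⟩, fun q hq y hy hqy => ?_⟩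
    obtain ⟨hys, hyQ⟩ := mem_sdiff.1 hy
    obtain rfl | hyv := eq_or_ne y v
    · exact hb q hq hqy.symm
    · exact hPQ y ((hcover y hys hyv).resolve_right hyQ) q hq hqy.symm

lemma isDisconnectedOn_or_compl_of_erase {s : Finset V} {v : V} (hP4 : ¬G.HasInducedP4On s)
    (hv : v ∈ s) (h : G.IsDisconnectedOn (s.erase v)) :
    G.IsDisconnectedOn s ∨ Gᶜ.IsDisconnectedOn s := by
  obtain ⟨A, hAt, hA, hB, hAB⟩ := h
  have hts : s.erase v ⊆ s := erase_subset v s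
  have hcover : ∀ y ∈ s, y ≠ v → y ∈ A ∨ y ∈ s.erase v \ A := fun y hys hyv => by
    by_cases hyA : y ∈ A
    exacts [.inl hyA, .inr (mem_sdiff.2 ⟨mem_erase.2 ⟨hyv, hys⟩, hyA⟩)]
  by_cases hall : ∀ y ∈ s, y ≠ v → G.Adj v y
  · right
    obtain ⟨a, ha⟩ := hA
    refine ⟨{v}, singleton_subset_iff.2 hv, singleton_nonempty v,
      ⟨a, mem_sdiff.2 ⟨hts (hAt ha), by simpa using ne_of_mem_erase (hAt ha)⟩⟩, ?_⟩
    simp only [mem_singleton, mem_sdiff, compl_adj, not_and, not_not]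
    rintro _ rfl y ⟨hys, hyv⟩ -
    exact hall y hys hyv
  · left
    push Not at hall
    obtain ⟨x, hxs, hxv, hvx⟩ := hall
    rcases hcover x hxs hxv with hxA | hxB
    · exact isDisconnectedOn_of_not_adj hP4 hv (hAt.trans hts) (sdiff_subset.trans hts)
        (by simp) hB hcover hAB hxA hvx
    · exact isDisconnectedOn_of_not_adj hP4 hv (sdiff_subset.trans hts) (hAt.trans hts)
        (fun h => ne_of_mem_erase (hAt h) rfl) hA
        (fun y hys hyv => (hcover y hys hyv).symm)
        (fun p hp q hq hpq => hAB q hq p hp hpq.symm) hxB hvx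

/-- Seinsche's theorem. -/
theorem isDisconnectedOn_or_compl (G : SimpleGraph V) (s : Finset V) (hs : 2 ≤ #s)
    (hP4 : ¬G.HasInducedP4On s) : G.IsDisconnectedOn s ∨ Gᶜ.IsDisconnectedOn s := by
  induction s using Finset.strongInduction generalizing G with
  | H s ih =>
  obtain hs2 | hs3 := hs.eq_or_lt
  · obtain ⟨x, y, hxy, rfl⟩ := card_eq_two.mp hs2.symm
    by_cases h : G.Adj x y
    · exact .inr (isDisconnectedOn_pair hxy (by simp [h]))
    · exact .inl (isDisconnectedOn_pair hxy h)
  obtain ⟨v, hv⟩ := card_pos.mp (by omega : 0 < #s)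
  have hvt : s.erase v ⊂ s := erase_ssubset hv
  have ht : 2 ≤ #(s.erase v) := by rw [card_erase_of_mem hv]; omega
  rcases ih _ hvt G ht (fun h => hP4 (h.mono hvt.subset)) with h | h
  · exact isDisconnectedOn_or_compl_of_erase hP4 hv h
  · simpa [or_comm] using
      isDisconnectedOn_or_compl_of_erase (hasInducedP4On_compl.not.2 hP4) hv h

lemma HasTwinsOn.of_isolated {s P : Finset V} (h : G.HasTwinsOn P) (hPs : P ⊆ s)
    (hiso : ∀ p ∈ P, ∀ z ∈ s \ P, ¬G.Adj p z) : G.HasTwinsOn s := by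
  obtain ⟨x, hx, y, hy, hxy, htw⟩ := h
  refine ⟨x, hPs hx, y, hPs hy, hxy, fun z hz hzx hzy => ?_⟩
  by_cases hzP : z ∈ P
  · exact htw z hzP hzx hzy
  · have hz' : z ∈ s \ P := mem_sdiff.2 ⟨hz, hzP⟩
    exact iff_of_false (hiso x hx z hz') (hiso y hy z hz')

end Disconnected

theorem hasTwinsOn_of_not_hasInducedP4On (G : SimpleGraph V) (s : Finset V) (hs : 2 ≤ #s)
    (hP4 : ¬G.HasInducedP4On s) : G.HasTwinsOn s := by
  classical
  induction s using Finset.strongInduction generalizing G with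
  | H s ih =>
  obtain hs2 | hs3 := hs.eq_or_lt
  · exact hasTwinsOn_of_card_eq_two hs2.symm
  wlog hG : G.IsDisconnectedOn s generalizing G
  · have hGc := (isDisconnectedOn_or_compl G s hs hP4).resolve_left hG
    simpa using this Gᶜ (by simpa using hP4) hGc
  obtain ⟨A, hAs, hA, hB, hAB⟩ := hG
  have hpart : ∀ P ⊂ s, 2 ≤ #P → (∀ p ∈ P, ∀ z ∈ s \ P, ¬G.Adj p z) → G.HasTwinsOn s :=
    fun P hPs hP2 hPiso =>
      (ih P hPs G hP2 fun h => hP4 (h.mono hPs.subset)).of_isolated hPs.subset hPiso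
  by_cases hA2 : 2 ≤ #A
  · exact hpart A (hAs.ssubset_of_not_subset (sdiff_nonempty.1 hB)) hA2 hAB
  · have hcard : #(s \ A) + #A = #s := card_sdiff_add_card_eq_card hAs
    refine hpart (s \ A) (sdiff_ssubset hAs hA) (by have := hA.card_pos; omega) ?_
    rw [Finset.sdiff_sdiff_eq_self hAs]
    exact fun p hp a ha hpa => hAB a ha p hp hpa.symm

end SimpleGraph

section Permutations

variable {n : ℕ}

def inversionGraph_s19 (σ : Equiv.Perm (Fin n)) : SimpleGraph (Fin n) where
  Adj := invAdj n σ
  symm := ⟨fun _ _ h => h.symm⟩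
  loopless := ⟨fun x h => by simp [invAdj] at h⟩

def ContainsPatternOn (σ : Equiv.Perm (Fin n)) (τ : Fin 4 → Fin 4) (s : Finset (Fin n)) :
    Prop :=
  ∃ f : Fin 4 → Fin n, StrictMono f ∧ (∀ i, f i ∈ s) ∧ ∀ i j, τ i < τ j ↔ σ (f i) < σ (f j)

lemma strictMono_vec_four {α : Type*} [Preorder α] {a b c d : α} (hab : a < b) (hbc : b < c)
    (hcd : c < d) : StrictMono ![a, b, c, d] := by
  refine Fin.strictMono_iff_lt_succ.2 fun i => ?_
  fin_cases i <;> assumption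

lemma containsPatternOn_of_strictMono {σ : Equiv.Perm (Fin n)} {τ : Fin 4 → Fin 4}
    {s : Finset (Fin n)} {f k : Fin 4 → Fin n} (hf : StrictMono f) (hk : StrictMono k)
    (hfs : ∀ i, f i ∈ s) (hσ : ∀ i, σ (f i) = k (τ i)) : ContainsPatternOn σ τ s :=
  ⟨f, hf, hfs, fun i j => by rw [hσ, hσ, hk.lt_iff_lt]⟩

/-- The two cases are the patterns `2413` at positions `a c b d` and `3142` at `b a d c`. -/
lemma inversionGraph_path_cases {σ : Equiv.Perm (Fin n)} {a b c d : Fin n}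
    (hab : (inversionGraph_s19 σ).Adj a b) (hbc : (inversionGraph_s19 σ).Adj b c)
    (hcd : (inversionGraph_s19 σ).Adj c d) (hac : ¬(inversionGraph_s19 σ).Adj a c)
    (had : ¬(inversionGraph_s19 σ).Adj a d) (hbd : ¬(inversionGraph_s19 σ).Adj b d)
    (hne_ac : a ≠ c) (hne_bd : b ≠ d) (hlt : a < d) :
    (a < c ∧ c < b ∧ b < d ∧ σ b < σ a ∧ σ a < σ d ∧ σ d < σ c) ∨
      (b < a ∧ a < d ∧ d < c ∧ σ a < σ c ∧ σ c < σ b ∧ σ b < σ d) := by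
  have := σ.injective.ne hne_ac
  have := σ.injective.ne hne_bd
  have := σ.injective.ne hlt.ne
  simp only [inversionGraph_s19, invAdj] at *
  omega

lemma containsPatternOn_of_hasInducedP4On {σ : Equiv.Perm (Fin n)} {s : Finset (Fin n)}
    (h : (inversionGraph_s19 σ).HasInducedP4On s) :
    ContainsPatternOn σ pat2413 s ∨ ContainsPatternOn σ pat3142 s := by
  obtain ⟨a, ha, b, hb, c, hc, d, hd, hab, hbc, hcd, hac, had, hbd⟩ := h
  obtain ⟨hne_ac, hne_ad, hne_bd⟩ := SimpleGraph.ne_of_induced_P4 hab hcd hac had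
  wlog hlt : a < d generalizing a b c d
  · exact this d hd c hc b hb a ha hcd.symm hbc.symm hab.symm (fun h => hbd h.symm)
      (fun h => had h.symm) (fun h => hac h.symm) hne_bd.symm hne_ad.symm hne_ac.symm
      (lt_of_le_of_ne (not_lt.1 hlt) hne_ad.symm)
  rcases inversionGraph_path_cases hab hbc hcd hac had hbd hne_ac hne_bd hlt with
    ⟨h₁, h₂, h₃, h₄, h₅, h₆⟩ | ⟨h₁, h₂, h₃, h₄, h₅, h₆⟩
  · refine .inl (containsPatternOn_of_strictMono (f := ![a, c, b, d]) (k := ![σ b, σ a, σ d, σ c])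
      (strictMono_vec_four h₁ h₂ h₃) (strictMono_vec_four h₄ h₅ h₆) ?_ ?_) <;>
      intro i <;> fin_cases i <;> simp [pat2413, ha, hb, hc, hd]
  · refine .inr (containsPatternOn_of_strictMono (f := ![b, a, d, c]) (k := ![σ a, σ c, σ b, σ d])
      (strictMono_vec_four h₁ h₂ h₃) (strictMono_vec_four h₄ h₅ h₆) ?_ ?_) <;>
      intro i <;> fin_cases i <;> simp [pat3142, ha, hb, hc, hd]

end Permutations

theorem statement19_general (n : ℕ) [NeZero n] (hn : 4 ≤ n) (σ : Equiv.Perm (Fin n))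
    (htf : ¬ ∃ x y : Fin n, x ≠ 0 ∧ y ≠ 0 ∧ x ≠ y ∧
      ∀ z : Fin n, z ≠ 0 → z ≠ x → z ≠ y → (invAdj n σ x z ↔ invAdj n σ y z)) :
    (∃ f : Fin 4 → Fin n, StrictMono f ∧ (∀ i, f i ≠ 0) ∧
      ∀ i j : Fin 4, pat2413 i < pat2413 j ↔ σ (f i) < σ (f j)) ∨
    (∃ f : Fin 4 → Fin n, StrictMono f ∧ (∀ i, f i ≠ 0) ∧
      ∀ i j : Fin 4, pat3142 i < pat3142 j ↔ σ (f i) < σ (f j)) := by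
  have hcard : 2 ≤ #(univ.erase (0 : Fin n)) := by
    rw [card_erase_of_mem (mem_univ 0), card_univ, Fintype.card_fin]
    omega
  have hP4 : (inversionGraph_s19 σ).HasInducedP4On (univ.erase 0) := by
    by_contra h
    obtain ⟨x, hx, y, hy, hxy, htw⟩ := (inversionGraph_s19 σ).hasTwinsOn_of_not_hasInducedP4On _ hcard h
    exact htf ⟨x, y, ne_of_mem_erase hx, ne_of_mem_erase hy, hxy,
      fun z hz => htw z (mem_erase.2 ⟨hz, mem_univ z⟩)⟩
  refine (containsPatternOn_of_hasInducedP4On hP4).imp ?_ ?_ <;>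
    exact fun ⟨f, hf, hfs, hpat⟩ => ⟨f, hf, fun i => ne_of_mem_erase (hfs i), hpat⟩

/-- If `σ` fixes `0`, `n ≥ 4`, and the inversion graph of `σ` restricted to the
nonzero indices has no pair of twins, then `σ` contains the pattern 2413 or 3142
among the nonzero indices. -/
theorem statement19 (n : ℕ) [NeZero n] (hn : 4 ≤ n) (σ : Equiv.Perm (Fin n))
    (h0 : σ 0 = 0)
    (htf : ¬ ∃ x y : Fin n, x ≠ 0 ∧ y ≠ 0 ∧ x ≠ y ∧
      ∀ z : Fin n, z ≠ 0 → z ≠ x → z ≠ y → (invAdj n σ x z ↔ invAdj n σ y z)) :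
    (∃ f : Fin 4 → Fin n, StrictMono f ∧ (∀ i, f i ≠ 0) ∧
      ∀ i j : Fin 4, pat2413 i < pat2413 j ↔ σ (f i) < σ (f j)) ∨
    (∃ f : Fin 4 → Fin n, StrictMono f ∧ (∀ i, f i ≠ 0) ∧
      ∀ i j : Fin 4, pat3142 i < pat3142 j ↔ σ (f i) < σ (f j)) :=
  statement19_general n hn σ htf
end
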